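/- arXiv:2210.00419 — 3 statements merged into one kernel-verified Lean document; each statement's English description precedes it below -/
import Mathlib

section
/- Let A_{m,n,ℓ} = ∫_ℝ h_m(x)·h_n(x)·h_ℓ(x)·e^{−x²/4} dx for natural numbers m, n, ℓ. Then A_{m,n,ℓ} = 0 unless m + n + ℓ is even and the triangle inequalities n ≤ m + ℓ, m ≤ n + ℓ, ℓ ≤ m + n all hold, in which case A_{m,n,ℓ} = (4π)^{−1/4}·(m!·n!·ℓ!)^{1/2} · ( ((m+n−ℓ)/2)! · ((n+ℓ−m)/2)! · ((m+ℓ−n)/2)! )^{−1}. -/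
/-!
Write `H` for the physicists' Hermite polynomials and `T m n ℓ = ∫ H_m H_n H_ℓ e^{-x²}`; the
substitution `x = y / 2` gives `A m n ℓ = 2 c_m c_n c_ℓ T m n ℓ`. Since `H_{m+1} = 2X H_m - H_m'`
and `H_n' = 2n H_{n-1}`, Gaussian integration by parts yields
`T (m+1) n ℓ = 2n T m (n-1) ℓ + 2ℓ T m n (ℓ-1)`. This recursion, the symmetry of `T` and
`T 0 0 0 = √π` determine `T`, and the closed form
`2^s √π m! n! ℓ! / ((s-m)! (s-n)! (s-ℓ)!)` with `s = (m+n+ℓ)/2`, set to zero unless `m, n, ℓ`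
satisfy the parity and triangle conditions, obeys the same rules.
-/

open Real MeasureTheory

/-- Physicists' Hermite polynomials, determined by `H 0 = 1`, `H 1 x = 2x` and the
recurrence `H (m+1) x = 2x · H m x − (H m)' x`. -/
noncomputable def physHermite : ℕ → ℝ → ℝ
  | 0 => fun _ => 1
  | m + 1 => fun x => 2 * x * physHermite m x - deriv (physHermite m) x

/-- The normalizing constants `c_m = 2^{−m/2} (4π)^{−1/4} (m!)^{−1/2}`. -/
noncomputable def hermiteCoeff (m : ℕ) : ℝ :=
  (2 : ℝ) ^ (-(m : ℝ) / 2) * (4 * π) ^ (-(1 / 4 : ℝ)) * (m.factorial : ℝ) ^ (-(1 / 2 : ℝ))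

/-- The normalized Hermite functions `h_m(y) = c_m · H_m(y/2)`. -/
noncomputable def h (m : ℕ) (y : ℝ) : ℝ := hermiteCoeff m * physHermite m (y / 2)

/-- The triple products `A_{m,n,ℓ} = ∫ h_m h_n h_ℓ e^{−x²/4} dx`. -/
noncomputable def A (m n ℓ : ℕ) : ℝ :=
  ∫ x : ℝ, h m x * h n x * h ℓ x * Real.exp (-x ^ 2 / 4)

open Polynomial

section HermitePolynomial

variable (R : Type*) [CommRing R]

noncomputable def physHermitePoly : ℕ → R[X]
  | 0 => 1
  | m + 1 => 2 * X * physHermitePoly m - derivative (physHermitePoly m)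

theorem physHermitePoly_succ (m : ℕ) :
    physHermitePoly R (m + 1) = 2 * X * physHermitePoly R m - derivative (physHermitePoly R m) :=
  rfl

theorem derivative_physHermitePoly (k : ℕ) :
    derivative (physHermitePoly R k) = 2 * k * physHermitePoly R (k - 1) := by
  induction k with
  | zero => simp [physHermitePoly]
  | succ k ih =>
    rw [physHermitePoly_succ, derivative_sub, derivative_mul, derivative_mul, ih]
    rcases k with _ | k
    · simp [physHermitePoly]
    · simp only [derivative_ofNat, derivative_X, derivative_mul, derivative_natCast,
        Nat.add_sub_cancel, physHermitePoly_succ R k]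
      push_cast
      ring

end HermitePolynomial

theorem physHermite_eq_eval (m : ℕ) : physHermite m = fun x ↦ (physHermitePoly ℝ m).eval x := by
  induction m with
  | zero => funext x; simp [physHermite, physHermitePoly]
  | succ m ih =>
    funext x
    simp [physHermite, physHermitePoly_succ, ih, Polynomial.deriv]

theorem integrable_eval_mul_exp_neg_mul_sq (Q : ℝ[X]) {b : ℝ} (hb : 0 < b) :
    Integrable fun x : ℝ ↦ Q.eval x * exp (-b * x ^ 2) := by
  induction Q using Polynomial.induction_on' with
  | add p q hp hq =>
    simp only [eval_add, add_mul]
    exact hp.add hq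
  | monomial k a =>
    have hk := integrable_rpow_mul_exp_neg_mul_sq hb (s := k) (by linarith [k.cast_nonneg (α := ℝ)])
    simpa [Real.rpow_natCast, mul_assoc] using hk.const_mul a

noncomputable def gaussianIntegral : ℝ[X] →ₗ[ℝ] ℝ where
  toFun Q := ∫ x : ℝ, Q.eval x * exp (-x ^ 2)
  map_add' p q := by
    simp only [eval_add, add_mul]
    exact integral_add (by simpa using integrable_eval_mul_exp_neg_mul_sq p one_pos)
      (by simpa using integrable_eval_mul_exp_neg_mul_sq q one_pos)
  map_smul' a p := by
    simp only [eval_smul, smul_eq_mul, mul_assoc, RingHom.id_apply]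
    exact integral_const_mul a _

theorem gaussianIntegral_apply (Q : ℝ[X]) :
    gaussianIntegral Q = ∫ x : ℝ, Q.eval x * exp (-x ^ 2) := rfl

theorem gaussianIntegral_one : gaussianIntegral 1 = √π := by
  simpa [gaussianIntegral_apply] using integral_gaussian 1

theorem gaussianIntegral_C_mul (a : ℝ) (Q : ℝ[X]) :
    gaussianIntegral (C a * Q) = a * gaussianIntegral Q := by
  rw [C_mul', map_smul, smul_eq_mul]

-- Gaussian integration by parts: `(Q e^{-x²})' = (Q' - 2xQ) e^{-x²}` has integral zero.
theorem gaussianIntegral_derivative (Q : ℝ[X]) :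
    gaussianIntegral (derivative Q) = gaussianIntegral (2 * X * Q) := by
  have hint (P : ℝ[X]) : Integrable fun x : ℝ ↦ P.eval x * exp (-x ^ 2) := by
    simpa using integrable_eval_mul_exp_neg_mul_sq P one_pos
  have hexp (x : ℝ) : HasDerivAt (fun x : ℝ ↦ exp (-x ^ 2)) (-2 * x * exp (-x ^ 2)) x := by
    simpa [mul_comm] using ((hasDerivAt_pow 2 x).neg).exp
  have hibp := integral_mul_deriv_eq_deriv_mul_of_integrable (u := fun x ↦ Q.eval x)
    (fun x _ ↦ Q.hasDerivAt x) (fun x _ ↦ hexp x)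
    ((hint (-2 * X * Q)).congr (.of_forall fun x ↦ by simp; ring))
    (hint (derivative Q)) (hint Q)
  simp only [gaussianIntegral_apply, eval_mul, eval_ofNat, eval_X]
  rw [← neg_neg (∫ x, eval x (derivative Q) * _), ← hibp, ← integral_neg]
  congr 1 with x
  ring

structure SatisfiesHermiteTripleRecursion {R : Type*} [Semiring R] (f : ℕ → ℕ → ℕ → R) :
    Prop where
  swap₁₂ : ∀ m n ℓ, f m n ℓ = f n m ℓ
  swap₂₃ : ∀ m n ℓ, f m n ℓ = f m ℓ n
  succ : ∀ m n ℓ, f (m + 1) n ℓ = 2 * n * f m (n - 1) ℓ + 2 * ℓ * f m n (ℓ - 1)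

theorem SatisfiesHermiteTripleRecursion.eq {R : Type*} [Semiring R] {f g : ℕ → ℕ → ℕ → R}
    (hf : SatisfiesHermiteTripleRecursion f) (hg : SatisfiesHermiteTripleRecursion g)
    (h₀ : f 0 0 0 = g 0 0 0) : f = g := by
  suffices key : ∀ N m n ℓ, m + n + ℓ = N → f m n ℓ = g m n ℓ by
    funext m n ℓ
    exact key _ m n ℓ rfl
  intro N
  induction N using Nat.strong_induction_on with
  | _ N ih =>
    have hsucc (m n ℓ : ℕ) (hN : m + 1 + n + ℓ = N) : f (m + 1) n ℓ = g (m + 1) n ℓ := by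
      rw [hf.succ, hg.succ, ih _ (by omega) m (n - 1) ℓ rfl, ih _ (by omega) m n (ℓ - 1) rfl]
    rintro (_ | m) (_ | n) (_ | ℓ) hN
    · exact h₀
    · rw [hf.swap₂₃, hf.swap₁₂, hg.swap₂₃, hg.swap₁₂]
      exact hsucc ℓ 0 0 (by omega)
    · rw [hf.swap₁₂, hg.swap₁₂]
      exact hsucc n 0 0 (by omega)
    · rw [hf.swap₁₂, hg.swap₁₂]
      exact hsucc n 0 _ (by omega)
    all_goals exact hsucc m _ _ (by omega)

local notation "H" => physHermitePoly ℝ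

noncomputable def hermiteTriple (m n ℓ : ℕ) : ℝ :=
  gaussianIntegral (H m * H n * H ℓ)

theorem hermiteTriple_zero : hermiteTriple 0 0 0 = √π := by
  simp [hermiteTriple, physHermitePoly, gaussianIntegral_one]

theorem satisfiesHermiteTripleRecursion_hermiteTriple :
    SatisfiesHermiteTripleRecursion hermiteTriple where
  swap₁₂ m n ℓ := by simp only [hermiteTriple, mul_comm (H m)]
  swap₂₃ m n ℓ := by simp only [hermiteTriple, mul_right_comm _ (H n)]
  succ m n ℓ := by
    have hsplit : H (m + 1) * H n * H ℓ =
        2 * X * (H m * H n * H ℓ) - derivative (H m) * H n * H ℓ := by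
      rw [physHermitePoly_succ]; ring
    have hprod : derivative (H m * H n * H ℓ) - derivative (H m) * H n * H ℓ =
        C (2 * n : ℝ) * (H m * H (n - 1) * H ℓ) + C (2 * ℓ : ℝ) * (H m * H n * H (ℓ - 1)) := by
      simp only [derivative_mul, derivative_physHermitePoly, map_mul, map_natCast, map_ofNat]
      ring
    simp only [hermiteTriple]
    rw [hsplit, map_sub, ← gaussianIntegral_derivative, ← map_sub, hprod, map_add,
      gaussianIntegral_C_mul, gaussianIntegral_C_mul]

def IsEvenTriangle (m n ℓ : ℕ) : Prop :=
  Even (m + n + ℓ) ∧ n ≤ m + ℓ ∧ m ≤ n + ℓ ∧ ℓ ≤ m + n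

theorem isEvenTriangle_iff {m n ℓ : ℕ} :
    IsEvenTriangle m n ℓ ↔ ∃ a b c, m = b + c ∧ n = a + c ∧ ℓ = a + b := by
  constructor
  · rintro ⟨⟨t, ht⟩, h₁, h₂, h₃⟩
    exact ⟨(n + ℓ - m) / 2, (m + ℓ - n) / 2, (m + n - ℓ) / 2, by omega, by omega, by omega⟩
  · rintro ⟨a, b, c, rfl, rfl, rfl⟩
    exact ⟨⟨a + b + c, by ring⟩, by omega, by omega, by omega⟩

theorem isEvenTriangle_comm₁₂ {m n ℓ : ℕ} : IsEvenTriangle m n ℓ ↔ IsEvenTriangle n m ℓ := by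
  simp only [IsEvenTriangle, add_comm m n]
  constructor <;> rintro ⟨he, _, _, _⟩ <;> exact ⟨he, by omega, by omega, by omega⟩

theorem isEvenTriangle_comm₂₃ {m n ℓ : ℕ} : IsEvenTriangle m n ℓ ↔ IsEvenTriangle m ℓ n := by
  simp only [IsEvenTriangle, add_right_comm m n ℓ]
  constructor <;> rintro ⟨he, _, _, _⟩ <;> exact ⟨he, by omega, by omega, by omega⟩

-- The closed form at `(m, n, ℓ) = (b + c, a + c, a + b)`, i.e. `a = s - m`, `b = s - n`,
-- `c = s - ℓ` with `s = (m + n + ℓ) / 2`.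
noncomputable def hermiteTripleValue (a b c : ℕ) : ℝ :=
  2 ^ (a + b + c) * √π * ((b + c).factorial * (a + c).factorial * (a + b).factorial) /
    (a.factorial * b.factorial * c.factorial)

theorem hermiteTripleValue_comm₁₂ (a b c : ℕ) :
    hermiteTripleValue a b c = hermiteTripleValue b a c := by
  simp only [hermiteTripleValue, add_comm a b, add_comm a c, add_comm b c]
  ring

theorem hermiteTripleValue_comm₂₃ (a b c : ℕ) :
    hermiteTripleValue a b c = hermiteTripleValue a c b := by
  simp only [hermiteTripleValue, add_comm b c, add_right_comm a b c]
  ring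

theorem succ_mul_hermiteTripleValue_succ (a b c : ℕ) :
    (c + 1) * hermiteTripleValue a b (c + 1) =
      2 * (a + c + 1) * (b + c + 1) * hermiteTripleValue a b c := by
  simp only [hermiteTripleValue, ← add_assoc, Nat.factorial_succ, pow_succ]
  push_cast
  field_simp

open Classical in
noncomputable def hermiteTripleClosedForm (m n ℓ : ℕ) : ℝ :=
  if IsEvenTriangle m n ℓ then
    hermiteTripleValue ((n + ℓ - m) / 2) ((m + ℓ - n) / 2) ((m + n - ℓ) / 2)
  else 0

theorem hermiteTripleClosedForm_add (a b c : ℕ) :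
    hermiteTripleClosedForm (b + c) (a + c) (a + b) = hermiteTripleValue a b c := by
  rw [hermiteTripleClosedForm, if_pos (isEvenTriangle_iff.mpr ⟨a, b, c, rfl, rfl, rfl⟩)]
  congr 1 <;> omega

theorem hermiteTripleClosedForm_of_not {m n ℓ : ℕ} (h : ¬IsEvenTriangle m n ℓ) :
    hermiteTripleClosedForm m n ℓ = 0 :=
  if_neg h

theorem hermiteTripleClosedForm_comm₁₂ (m n ℓ : ℕ) :
    hermiteTripleClosedForm m n ℓ = hermiteTripleClosedForm n m ℓ := by
  by_cases h : IsEvenTriangle m n ℓ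
  · obtain ⟨a, b, c, rfl, rfl, rfl⟩ := isEvenTriangle_iff.mp h
    rw [hermiteTripleClosedForm_add, hermiteTripleValue_comm₁₂, ← hermiteTripleClosedForm_add,
      add_comm b a]
  · rw [hermiteTripleClosedForm_of_not h,
      hermiteTripleClosedForm_of_not (isEvenTriangle_comm₁₂.not.mp h)]

theorem hermiteTripleClosedForm_comm₂₃ (m n ℓ : ℕ) :
    hermiteTripleClosedForm m n ℓ = hermiteTripleClosedForm m ℓ n := by
  by_cases h : IsEvenTriangle m n ℓ
  · obtain ⟨a, b, c, rfl, rfl, rfl⟩ := isEvenTriangle_iff.mp h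
    rw [add_comm b c, hermiteTripleClosedForm_add, ← add_comm b c, hermiteTripleClosedForm_add,
      hermiteTripleValue_comm₂₃]
  · rw [hermiteTripleClosedForm_of_not h,
      hermiteTripleClosedForm_of_not (isEvenTriangle_comm₂₃.not.mp h)]

theorem natCast_mul_hermiteTripleClosedForm_pred (a b c : ℕ) :
    ((b + c : ℕ) : ℝ) *
        (2 * ((a + c : ℕ) : ℝ) * hermiteTripleClosedForm (b + c - 1) (a + c - 1) (a + b)) =
      c * hermiteTripleValue a b c := by
  rcases c with _ | c
  · rcases a with _ | a
    · simp
    · rw [hermiteTripleClosedForm_of_not fun h ↦ by have := h.2.2.2; omega]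
      simp
  · rw [show b + (c + 1) - 1 = b + c by omega, show a + (c + 1) - 1 = a + c by omega,
      hermiteTripleClosedForm_add]
    push_cast
    linear_combination (succ_mul_hermiteTripleValue_succ a b c).symm

theorem natCast_mul_hermiteTripleClosedForm_pred_of_not {m n ℓ : ℕ}
    (h : ¬IsEvenTriangle (m + 1) n ℓ) : (n : ℝ) * hermiteTripleClosedForm m (n - 1) ℓ = 0 := by
  rcases n with _ | n
  · simp
  · rw [Nat.add_sub_cancel, hermiteTripleClosedForm_of_not, mul_zero]
    intro h'
    obtain ⟨a, b, c, rfl, rfl, rfl⟩ := isEvenTriangle_iff.mp h'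
    exact h (isEvenTriangle_iff.mpr ⟨a, b, c + 1, by omega, by omega, rfl⟩)

theorem satisfiesHermiteTripleRecursion_hermiteTripleClosedForm :
    SatisfiesHermiteTripleRecursion hermiteTripleClosedForm where
  swap₁₂ := hermiteTripleClosedForm_comm₁₂
  swap₂₃ := hermiteTripleClosedForm_comm₂₃
  succ m n ℓ := by
    by_cases h : IsEvenTriangle (m + 1) n ℓ
    · obtain ⟨a, b, c, hm, rfl, rfl⟩ := isEvenTriangle_iff.mp h
      have hbc : ((b + c : ℕ) : ℝ) ≠ 0 := by exact_mod_cast (by omega : b + c ≠ 0)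
      have hn := natCast_mul_hermiteTripleClosedForm_pred a b c
      have hℓ := natCast_mul_hermiteTripleClosedForm_pred a c b
      rw [add_comm c b, ← hermiteTripleClosedForm_comm₂₃, ← hermiteTripleValue_comm₂₃] at hℓ
      rw [show b + c - 1 = m by omega] at hn hℓ
      rw [hm, hermiteTripleClosedForm_add]
      apply mul_left_cancel₀ hbc
      push_cast at hn hℓ ⊢
      linear_combination -hn - hℓ
    · rw [hermiteTripleClosedForm_of_not h, hermiteTripleClosedForm_comm₂₃ m n,
        mul_assoc, mul_assoc, natCast_mul_hermiteTripleClosedForm_pred_of_not h,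
        natCast_mul_hermiteTripleClosedForm_pred_of_not (isEvenTriangle_comm₂₃.not.mp h)]
      ring

theorem A_eq_hermiteTriple (m n ℓ : ℕ) :
    A m n ℓ = 2 * (hermiteCoeff m * hermiteCoeff n * hermiteCoeff ℓ) * hermiteTriple m n ℓ := by
  have hsubst : ∀ y : ℝ, h m y * h n y * h ℓ y * exp (-y ^ 2 / 4) =
      hermiteCoeff m * hermiteCoeff n * hermiteCoeff ℓ *
        ((H m * H n * H ℓ).eval (y / 2) * exp (-(y / 2) ^ 2)) := by
    intro y
    simp only [h, physHermite_eq_eval, eval_mul]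
    ring_nf
  simp only [A, hsubst, integral_const_mul, hermiteTriple, gaussianIntegral_apply,
    Measure.integral_comp_div (fun x ↦ (H m * H n * H ℓ).eval x * exp (-x ^ 2))]
  norm_num
  ring

theorem hermiteCoeff_eq (m : ℕ) :
    hermiteCoeff m = (4 * π) ^ (-(1 / 4 : ℝ)) / √(2 ^ m * m.factorial) := by
  have h2 : (2 : ℝ) ^ (-(m : ℝ) / 2) = (√(2 ^ m))⁻¹ := by
    rw [neg_div, rpow_neg zero_le_two, sqrt_eq_rpow, ← rpow_natCast, ← rpow_mul zero_le_two]
    ring_nf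
  rw [hermiteCoeff, h2, rpow_neg (Nat.cast_nonneg _), ← sqrt_eq_rpow,
    sqrt_mul (pow_nonneg zero_le_two m)]
  field_simp

theorem two_mul_sqrt_pi_mul_rpow_neg_quarter_cube :
    2 * √π * ((4 * π) ^ (-(1 / 4 : ℝ))) ^ 3 = (4 * π) ^ (-(1 / 4 : ℝ)) := by
  set q := (4 * π) ^ (-(1 / 4 : ℝ))
  have hq : q ^ 2 = (2 * √π)⁻¹ := by
    rw [← rpow_natCast, ← rpow_mul (by positivity), show (4 : ℝ) * π = (2 * √π) ^ 2 by
      rw [mul_pow, sq_sqrt pi_pos.le]; norm_num, ← rpow_natCast, ← rpow_mul (by positivity)]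
    norm_num [rpow_neg_one]
  have hpos : 0 < 2 * √π := by positivity
  rw [pow_succ, hq]
  field_simp

theorem two_mul_hermiteCoeff_mul_hermiteTripleValue (a b c : ℕ) :
    2 * (hermiteCoeff (b + c) * hermiteCoeff (a + c) * hermiteCoeff (a + b)) *
        hermiteTripleValue a b c =
      (4 * π) ^ (-(1 / 4 : ℝ)) *
        √((b + c).factorial * (a + c).factorial * (a + b).factorial) /
          (a.factorial * b.factorial * c.factorial) := by
  rw [hermiteCoeff_eq, hermiteCoeff_eq, hermiteCoeff_eq, hermiteTripleValue]
  set q := (4 * π) ^ (-(1 / 4 : ℝ))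
  set N : ℝ := (b + c).factorial * (a + c).factorial * (a + b).factorial
  set D : ℝ := a.factorial * b.factorial * c.factorial
  have hsqrt : √(2 ^ (b + c) * (b + c).factorial) * √(2 ^ (a + c) * (a + c).factorial) *
      √(2 ^ (a + b) * (a + b).factorial) = 2 ^ (a + b + c) * √N := by
    rw [← sqrt_mul (by positivity), ← sqrt_mul (by positivity),
      show (2 : ℝ) ^ (b + c) * (b + c).factorial * (2 ^ (a + c) * (a + c).factorial) *
        (2 ^ (a + b) * (a + b).factorial) = (2 ^ (a + b + c)) ^ 2 * N by ring,
      sqrt_mul (by positivity), sqrt_sq (by positivity)]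
  have hN : 0 < √N := by positivity
  calc 2 * (q / √(2 ^ (b + c) * (b + c).factorial) * (q / √(2 ^ (a + c) * (a + c).factorial)) *
          (q / √(2 ^ (a + b) * (a + b).factorial))) * (2 ^ (a + b + c) * √π * N / D)
      = 2 * √π * q ^ 3 * (N / √N) / D := by
        rw [div_mul_div_comm, div_mul_div_comm, hsqrt]
        field_simp
    _ = q * √N / D := by rw [two_mul_sqrt_pi_mul_rpow_neg_quarter_cube, div_sqrt]

theorem hermiteTripleClosedForm_zero : hermiteTripleClosedForm 0 0 0 = √π := by
  simpa [hermiteTripleValue] using hermiteTripleClosedForm_add 0 0 0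

theorem hermiteTriple_eq_closedForm : hermiteTriple = hermiteTripleClosedForm :=
  satisfiesHermiteTripleRecursion_hermiteTriple.eq
    satisfiesHermiteTripleRecursion_hermiteTripleClosedForm
    (hermiteTriple_zero.trans hermiteTripleClosedForm_zero.symm)

/-- `A_{m,n,ℓ} = 0` unless `m + n + ℓ` is even and the triangle inequalities hold, in which
case `A_{m,n,ℓ} = (4π)^{−1/4}(m!n!ℓ!)^{1/2}(((m+n−ℓ)/2)!((n+ℓ−m)/2)!((m+ℓ−n)/2)!)^{−1}`. -/
theorem hermite_triple_product (m n ℓ : ℕ) :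
    (¬(Even (m + n + ℓ) ∧ n ≤ m + ℓ ∧ m ≤ n + ℓ ∧ ℓ ≤ m + n) → A m n ℓ = 0) ∧
    ((Even (m + n + ℓ) ∧ n ≤ m + ℓ ∧ m ≤ n + ℓ ∧ ℓ ≤ m + n) →
      A m n ℓ = (4 * π) ^ (-(1 / 4 : ℝ)) *
        ((m.factorial * n.factorial * ℓ.factorial : ℕ) : ℝ) ^ ((1 / 2 : ℝ)) *
        (((((m + n - ℓ) / 2).factorial * ((n + ℓ - m) / 2).factorial *
            ((m + ℓ - n) / 2).factorial : ℕ) : ℝ))⁻¹) := by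
  rw [A_eq_hermiteTriple, hermiteTriple_eq_closedForm]
  refine ⟨fun hC ↦ by rw [hermiteTripleClosedForm_of_not hC, mul_zero], fun hC ↦ ?_⟩
  obtain ⟨a, b, c, rfl, rfl, rfl⟩ := isEvenTriangle_iff.mp hC
  rw [hermiteTripleClosedForm_add, two_mul_hermiteCoeff_mul_hermiteTripleValue,
    show (b + c + (a + c) - (a + b)) / 2 = c by omega,
    show (a + c + (a + b) - (b + c)) / 2 = a by omega,
    show (b + c + (a + b) - (a + c)) / 2 = b by omega]
  push_cast
  rw [sqrt_eq_rpow]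
  ring
end

section
/- Let γ > 0, δ > 0, C ≥ 0, T > 0, and let ε : [T, ∞) → [0, ∞) satisfy ε(t) → 0 as t → ∞. Let λ : [T, ∞) → ℝ be C¹ with λ(t) → 0 as t → ∞ and |λ'(t) + γ·λ(t)²| ≤ ε(t)·λ(t)² + C·e^{−δt} for all t ≥ T. Then either t·λ(t) → 1/γ as t → ∞, or t·λ(t) → 0 as t → ∞. -/
open Real Filter

/-!
Fix `K > 0` with `C ≤ γK²/2` and restrict to times where `ε ≤ γ/2`, so that
`-(3γ/2)λ² - Ce^{-δt} ≤ λ' ≤ -(γ/2)λ² + Ce^{-δt}`. Then two first-contact arguments apply.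
If `λ` ever went below `-K e^{-δt/2}`, then `λ' < 0` at that level from then on, so `λ` would
stay bounded away from `0`. If `λ` ever reaches `b(t) = K e^{-δt/4}`, it stays above it, because
eventually `b' < -(3γ/2)b² - Ce^{-δt}`: the barrier falls faster than `λ` can.
If `λ` never reaches `b`, then `|λ| ≤ K e^{-δt/4}` and `tλ → 0`. If it does, `Ce^{-δt} = o(λ²)`,
so `μ = 1/λ` satisfies `μ' = -λ'/λ² → γ`, hence `μ(t)/t → γ` and `tλ → 1/γ`.
-/

open Topology

theorem le_of_deriv_lt_at_contact {f f' g g' : ℝ → ℝ} {a : ℝ}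
    (hf : ∀ x ≥ a, HasDerivAt f (f' x) x) (hg : ∀ x ≥ a, HasDerivAt g (g' x) x)
    (ha : f a ≤ g a) (hcontact : ∀ x ≥ a, f x = g x → f' x < g' x) :
    ∀ x ≥ a, f x ≤ g x := fun _ hb =>
  image_le_of_deriv_right_lt_deriv_boundary'
    (fun x hx => (hf x hx.1).continuousAt.continuousWithinAt)
    (fun x hx => (hf x hx.1).hasDerivWithinAt) ha
    (fun x hx => (hg x hx.1).continuousAt.continuousWithinAt)
    (fun x hx => (hg x hx.1).hasDerivWithinAt)
    (fun x hx => hcontact x hx.1) ⟨hb, le_rfl⟩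

theorem tendsto_div_id_of_tendsto_deriv {f f' : ℝ → ℝ} {a c : ℝ}
    (hf : ∀ x ≥ a, HasDerivAt f (f' x) x) (hf' : Tendsto f' atTop (𝓝 c)) :
    Tendsto (fun x => f x / x) atTop (𝓝 c) := by
  rw [Metric.tendsto_atTop]
  intro η hη
  obtain ⟨s, hs⟩ := eventually_atTop.mp ((hf'.eventually
    (Metric.closedBall_mem_nhds c (half_pos hη))).and (eventually_ge_atTop (max a 0)))
  have hlip : ∀ x ≥ s, |f x - c * x - (f s - c * s)| ≤ η / 2 * (x - s) := fun x hx =>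
    norm_image_sub_le_of_norm_deriv_le_segment' (f := fun y => f y - c * y)
      (fun y hy => (((hf y ((le_max_left a 0).trans (hs y hy.1).2)).sub
        ((hasDerivAt_id y).const_mul c)).hasDerivWithinAt).congr_deriv (by simp))
      (fun y hy => (hs y hy.1).1) x ⟨hx, le_rfl⟩
  have hs0 : 0 ≤ s := (le_max_right a 0).trans (hs s le_rfl).2
  refine ⟨max s (2 * (|f s - c * s| + 1) / η), fun x hx => ?_⟩
  have hxs : s ≤ x := le_of_max_le_left hx
  have hxM : 2 * (|f s - c * s| + 1) / η ≤ x := le_of_max_le_right hx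
  have hx0 : 0 < x := lt_of_lt_of_le (by positivity) hxM
  have hM : |f s - c * s| < η / 2 * x := by
    rw [div_le_iff₀ hη] at hxM; linarith
  have hfx : |f x - c * x| < η * x := by
    have := abs_sub_abs_le_abs_sub (f x - c * x) (f s - c * s)
    nlinarith [hlip x hxs]
  rw [Real.dist_eq, show f x / x - c = (f x - c * x) / x by field_simp, abs_div,
    abs_of_pos hx0, div_lt_iff₀ hx0]
  exact hfx

theorem tendsto_mul_of_tendsto_neg_deriv_div_sq {lam lam' : ℝ → ℝ} {a γ : ℝ} (hγ : γ ≠ 0)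
    (hderiv : ∀ t ≥ a, HasDerivAt lam (lam' t) t) (hne : ∀ t ≥ a, lam t ≠ 0)
    (h : Tendsto (fun t => -lam' t / lam t ^ 2) atTop (𝓝 γ)) :
    Tendsto (fun t => t * lam t) atTop (𝓝 (1 / γ)) := by
  have hinv :=
    (tendsto_div_id_of_tendsto_deriv (fun t ht => (hderiv t ht).inv (hne t ht)) h).inv₀ hγ
  rw [one_div]
  refine hinv.congr fun t => ?_
  simp only [Pi.inv_apply, inv_div, div_inv_eq_mul]

theorem tendsto_mul_of_abs_le_exp {f : ℝ → ℝ} {K b a : ℝ} (hb : 0 < b)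
    (hf : ∀ t ≥ a, |f t| ≤ K * exp (-b * t)) : Tendsto (fun t => t * f t) atTop (𝓝 0) := by
  have hlim : Tendsto (fun t => K * (t * exp (-b * t))) atTop (𝓝 0) := by
    simpa using (tendsto_rpow_mul_exp_neg_mul_atTop_nhds_zero 1 b hb).const_mul K
  refine squeeze_zero_norm' ?_ hlim
  filter_upwards [eventually_ge_atTop (max a 0)] with t ht
  rw [norm_mul, Real.norm_of_nonneg (le_of_max_le_right ht), Real.norm_eq_abs, mul_left_comm]
  exact mul_le_mul_of_nonneg_left (hf t (le_of_max_le_left ht)) (le_of_max_le_right ht)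

theorem tendsto_exp_neg_mul_atTop {b : ℝ} (hb : 0 < b) :
    Tendsto (fun t => exp (-b * t)) atTop (𝓝 0) := by
  simpa using tendsto_rpow_mul_exp_neg_mul_atTop_nhds_zero 0 b hb

section Riccati

variable {γ δ C K : ℝ} {lam lam' : ℝ → ℝ}

theorem riccati_bounds_of_le_half {e F l l' : ℝ} (h : |l' + γ * l ^ 2| ≤ e * l ^ 2 + F)
    (he : e ≤ γ / 2) : -(3 * γ / 2) * l ^ 2 - F ≤ l' ∧ l' ≤ -(γ / 2) * l ^ 2 + F := by
  have hl := sq_nonneg l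
  obtain ⟨h₁, h₂⟩ := abs_le.mp h
  constructor <;> nlinarith

theorem riccati_lower_barrier (hγ : 0 < γ) (hδ : 0 < δ) (hC : 0 ≤ C) (hK₀ : 0 ≤ K)
    (hK : C ≤ γ / 2 * K ^ 2) {t₁ : ℝ} (hderiv : ∀ t ≥ t₁, HasDerivAt lam (lam' t) t)
    (hle : ∀ t ≥ t₁, lam' t ≤ -(γ / 2) * lam t ^ 2 + C * exp (-δ * t))
    (hlim : Tendsto lam atTop (𝓝 0)) :
    ∀ t ≥ t₁, -(K * exp (-(δ / 2) * t)) ≤ lam t := by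
  intro t₀ ht₀
  by_contra! hbelow
  have hneg : lam t₀ < 0 := hbelow.trans_le (by simp only [neg_nonpos]; positivity)
  have hforcing : ∀ x ≥ t₀, C * exp (-δ * x) < γ / 2 * lam t₀ ^ 2 := fun x hx =>
    calc C * exp (-δ * x) ≤ C * exp (-δ * t₀) :=
          mul_le_mul_of_nonneg_left (exp_le_exp.mpr (by nlinarith)) hC
      _ ≤ γ / 2 * (K * exp (-(δ / 2) * t₀)) ^ 2 := by
        rw [mul_pow, ← exp_nat_mul]; ring_nf; nlinarith [exp_pos (-(δ * t₀))]
      _ < γ / 2 * lam t₀ ^ 2 := mul_lt_mul_of_pos_left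
          (by nlinarith [mul_nonneg hK₀ (exp_pos (-(δ / 2) * t₀)).le]) (half_pos hγ)
  have htrapped : ∀ x ≥ t₀, lam x ≤ lam t₀ :=
    le_of_deriv_lt_at_contact (fun x hx => hderiv x (ht₀.trans hx))
      (fun x _ => hasDerivAt_const x (lam t₀)) le_rfl fun x hx hcontact => by
        have := hle x (ht₀.trans hx); rw [hcontact] at this; linarith [hforcing x hx]
  obtain ⟨x, hx, hxlt⟩ :=
    ((eventually_ge_atTop t₀).and (hlim.eventually (lt_mem_nhds hneg))).exists
  exact (htrapped x hx).not_gt hxlt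

theorem riccati_exp_subsolution (hδ : 0 < δ) (hK : 0 < K) :
    ∀ᶠ t in atTop, -(δ / 4) * (K * exp (-(δ / 4) * t)) <
      -(3 * γ / 2) * (K * exp (-(δ / 4) * t)) ^ 2 - C * exp (-δ * t) := by
  have hs := tendsto_exp_neg_mul_atTop (by positivity : 0 < δ / 4)
  have hpoly : Tendsto (fun t => 3 * γ / 2 * K ^ 2 * exp (-(δ / 4) * t)
      + C * exp (-(δ / 4) * t) ^ 3) atTop (𝓝 0) := by
    simpa using (hs.const_mul _).add ((hs.pow 3).const_mul C)
  filter_upwards [hpoly.eventually_lt_const (by positivity : 0 < δ / 4 * K)] with t ht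
  have hs₀ := exp_pos (-(δ / 4) * t)
  have hexp : exp (-δ * t) = exp (-(δ / 4) * t) ^ 4 := by rw [← exp_nat_mul]; ring_nf
  rw [hexp]
  nlinarith [mul_lt_mul_of_pos_right ht hs₀]

theorem riccati_upper_barrier {t₀ : ℝ} (hderiv : ∀ t ≥ t₀, HasDerivAt lam (lam' t) t)
    (hge : ∀ t ≥ t₀, -(3 * γ / 2) * lam t ^ 2 - C * exp (-δ * t) ≤ lam' t)
    (hsub : ∀ t ≥ t₀, -(δ / 4) * (K * exp (-(δ / 4) * t)) <
      -(3 * γ / 2) * (K * exp (-(δ / 4) * t)) ^ 2 - C * exp (-δ * t))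
    (h₀ : K * exp (-(δ / 4) * t₀) ≤ lam t₀) :
    ∀ t ≥ t₀, K * exp (-(δ / 4) * t) ≤ lam t := by
  have hbarrier (t : ℝ) : HasDerivAt (fun t => K * exp (-(δ / 4) * t))
      (-(δ / 4) * (K * exp (-(δ / 4) * t))) t :=
    (((hasDerivAt_id' t).const_mul (-(δ / 4))).exp.const_mul K).congr_deriv (by ring)
  refine le_of_deriv_lt_at_contact (fun t _ => hbarrier t) hderiv h₀ fun t ht hcontact => ?_
  have := hsub t ht
  rw [hcontact] at this ⊢
  linarith [hge t ht]

theorem tendsto_neg_deriv_div_sq_of_exp_le (hδ : 0 < δ) (hK : 0 < K) {ε : ℝ → ℝ}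
    (hε : Tendsto ε atTop (𝓝 0)) {t₀ : ℝ} (hb : ∀ t ≥ t₀, K * exp (-(δ / 4) * t) ≤ lam t)
    (hric : ∀ t ≥ t₀, |lam' t + γ * lam t ^ 2| ≤ ε t * lam t ^ 2 + C * exp (-δ * t)) :
    Tendsto (fun t => -lam' t / lam t ^ 2) atTop (𝓝 γ) := by
  have hpos : ∀ t ≥ t₀, 0 < lam t := fun t ht => (by positivity : 0 < K * exp _).trans_le (hb t ht)
  have hdecay : Tendsto (fun t => exp (-δ * t) / lam t ^ 2) atTop (𝓝 0) := by
    have hbound : Tendsto (fun t => exp (-(δ / 2) * t) / K ^ 2) atTop (𝓝 0) := by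
      simpa using (tendsto_exp_neg_mul_atTop (half_pos hδ)).div_const (K ^ 2)
    refine squeeze_zero' (Eventually.of_forall fun t => by positivity) ?_ hbound
    filter_upwards [eventually_ge_atTop t₀] with t ht
    calc exp (-δ * t) / lam t ^ 2 ≤ exp (-δ * t) / (K * exp (-(δ / 4) * t)) ^ 2 := by
          gcongr; exact hb t ht
      _ = exp (-(δ / 2) * t) / K ^ 2 := by
          rw [mul_pow, ← exp_nat_mul, div_eq_div_iff (by positivity) (by positivity),
            mul_left_comm, ← exp_add]; ring_nf
  have hρ : Tendsto (fun t => ε t + C * (exp (-δ * t) / lam t ^ 2)) atTop (𝓝 0) := by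
    simpa using hε.add (hdecay.const_mul C)
  rw [tendsto_iff_norm_sub_tendsto_zero]
  refine squeeze_zero' (Eventually.of_forall fun t => norm_nonneg _) ?_ hρ
  filter_upwards [eventually_ge_atTop t₀] with t ht
  have hne : lam t ≠ 0 := (hpos t ht).ne'
  have hsq : 0 < lam t ^ 2 := by positivity
  calc ‖-lam' t / lam t ^ 2 - γ‖ = |lam' t + γ * lam t ^ 2| / lam t ^ 2 := by
        rw [Real.norm_eq_abs, ← abs_neg, ← abs_of_pos hsq, ← abs_div, abs_of_pos hsq]
        congr 1; field_simp; ring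
    _ ≤ (ε t * lam t ^ 2 + C * exp (-δ * t)) / lam t ^ 2 := by gcongr; exact hric t ht
    _ = ε t + C * (exp (-δ * t) / lam t ^ 2) := by field_simp

end Riccati

theorem scalar_riccati_dichotomy_general (γ δ C T : ℝ) (hγ : 0 < γ) (hδ : 0 < δ) (hC : 0 ≤ C)
    (ε : ℝ → ℝ) (hε : Tendsto ε atTop (nhds 0))
    (lam lam' : ℝ → ℝ)
    (hderiv : ∀ t, T ≤ t → HasDerivAt lam (lam' t) t)
    (hlim : Tendsto lam atTop (nhds 0))
    (hric : ∀ t, T ≤ t → |lam' t + γ * lam t ^ 2| ≤ ε t * lam t ^ 2 + C * Real.exp (-δ * t)) :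
    Tendsto (fun t => t * lam t) atTop (nhds (1 / γ)) ∨
    Tendsto (fun t => t * lam t) atTop (nhds 0) := by
  obtain ⟨K, hK₀, hK⟩ : ∃ K : ℝ, 0 < K ∧ C ≤ γ / 2 * K ^ 2 :=
    ⟨2 * C / γ + 1, by positivity, by field_simp; nlinarith⟩
  obtain ⟨t₁, ht₁⟩ := eventually_atTop.mp ((eventually_ge_atTop (max T 0)).and
    ((hε.eventually_le_const (half_pos hγ)).and (riccati_exp_subsolution (γ := γ) (C := C) hδ hK₀)))
  have hT₁ : ∀ t ≥ t₁, T ≤ t := fun t ht => le_of_max_le_left (ht₁ t ht).1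
  have hderiv₁ : ∀ t ≥ t₁, HasDerivAt lam (lam' t) t := fun t ht => hderiv t (hT₁ t ht)
  have hbounds (t : ℝ) (ht : t ≥ t₁) := riccati_bounds_of_le_half (hric t (hT₁ t ht)) (ht₁ t ht).2.1
  by_cases hcross : ∃ t₀ ≥ t₁, K * exp (-(δ / 4) * t₀) ≤ lam t₀
  · obtain ⟨t₀, ht₀, hb₀⟩ := hcross
    have hb := riccati_upper_barrier (fun t ht => hderiv₁ t (ht₀.trans ht))
      (fun t ht => (hbounds t (ht₀.trans ht)).1) (fun t ht => (ht₁ t (ht₀.trans ht)).2.2) hb₀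
    left
    exact tendsto_mul_of_tendsto_neg_deriv_div_sq hγ.ne' (fun t ht => hderiv₁ t (ht₀.trans ht))
      (fun t ht => ((by positivity : 0 < K * exp _).trans_le (hb t ht)).ne')
      (tendsto_neg_deriv_div_sq_of_exp_le hδ hK₀ hε hb fun t ht => hric t (hT₁ t (ht₀.trans ht)))
  · push Not at hcross
    right
    refine tendsto_mul_of_abs_le_exp (by positivity : 0 < δ / 4) fun t ht =>
      abs_le.mpr ⟨?_, (hcross t ht).le⟩
    calc -(K * exp (-(δ / 4) * t)) ≤ -(K * exp (-(δ / 2) * t)) := by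
          have : 0 ≤ t := le_of_max_le_right (ht₁ t ht).1
          gcongr; nlinarith
      _ ≤ lam t := riccati_lower_barrier hγ hδ hC hK₀.le hK hderiv₁
          (fun t ht => (hbounds t ht).2) hlim t ht

/-- Scalar perturbed Riccati dichotomy: if `λ(t) → 0` and
`|λ'(t) + γλ(t)²| ≤ ε(t)λ(t)² + Ce^{−δt}` with `ε(t) → 0`, then either `t·λ(t) → 1/γ`
or `t·λ(t) → 0` as `t → ∞`. -/
theorem scalar_riccati_dichotomy (γ δ C T : ℝ) (hγ : 0 < γ) (hδ : 0 < δ) (hC : 0 ≤ C)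
    (hT : 0 < T) (ε : ℝ → ℝ) (hε0 : ∀ t, T ≤ t → 0 ≤ ε t) (hε : Tendsto ε atTop (nhds 0))
    (lam lam' : ℝ → ℝ)
    (hderiv : ∀ t, T ≤ t → HasDerivAt lam (lam' t) t)
    (hlim : Tendsto lam atTop (nhds 0))
    (hric : ∀ t, T ≤ t → |lam' t + γ * lam t ^ 2| ≤ ε t * lam t ^ 2 + C * Real.exp (-δ * t)) :
    Tendsto (fun t => t * lam t) atTop (nhds (1 / γ)) ∨
    Tendsto (fun t => t * lam t) atTop (nhds 0) :=
  scalar_riccati_dichotomy_general γ δ C T hγ hδ hC ε hε lam lam' hderiv hlim hric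
end

section
/- Let u, φ : ℝ → ℝ be C² functions and let c < d be reals with φ'(x) ≠ 0 for every x ∈ [c, d]. Then for Lebesgue-almost every s ∈ ℝ, every point x ∈ [c, d] with u'(x) + s·φ'(x) = 0 satisfies u''(x) + s·φ''(x) ≠ 0; consequently, for almost every s ∈ ℝ, the function u + s·φ has only finitely many critical points in [c, d]. -/
/-!
For a parameter `s` to be bad, some `x ∈ [c, d]` must satisfy `u' + s φ' = 0` and
`u'' + s φ'' = 0`. Then `s = -u'(x)/φ'(x)`, and the Wronskian `u'' φ' - u' φ''` vanishes at `x`,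
which says exactly that `x` is a critical point of `g = -u'/φ'`. So the bad parameters are
critical values of `g`, a null set by Sard's lemma. For a good `s`, every zero of
`u' + s φ'` on the compact interval is simple, hence isolated, so there are finitely many.
-/

open MeasureTheory Filter Topology

theorem addHaar_image_eq_zero_of_hasDerivWithinAt_zero (μ : Measure ℝ) [μ.IsAddHaarMeasure]
    {f : ℝ → ℝ} {s : Set ℝ} (hf : ∀ x ∈ s, HasDerivWithinAt f 0 s x) : μ (f '' s) = 0 :=
  addHaar_image_eq_zero_of_det_fderivWithin_eq_zero μ (f' := fun _ => 0)
    (fun x hx => by simpa using (hf x hx).hasFDerivWithinAt)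
    (fun _ _ => by simp [ContinuousLinearMap.det])

theorem ae_forall_add_mul_eq_zero_imp_deriv_ne_zero {K : Set ℝ} {a b a' b' : ℝ → ℝ}
    (ha : ∀ x ∈ K, HasDerivWithinAt a (a' x) K x) (hb : ∀ x ∈ K, HasDerivWithinAt b (b' x) K x)
    (hb0 : ∀ x ∈ K, b x ≠ 0) :
    ∀ᵐ s : ℝ, ∀ x ∈ K, a x + s * b x = 0 → a' x + s * b' x ≠ 0 := by
  set S := {x ∈ K | a' x * b x - a x * b' x = 0}
  have hnull : volume ((fun x => -(a x / b x)) '' S) = 0 := by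
    refine addHaar_image_eq_zero_of_hasDerivWithinAt_zero volume fun x hx => ?_
    have hder := ((ha x hx.1).div (hb x hx.1) (hb0 x hx.1)).neg
    rw [hx.2, zero_div, neg_zero] at hder
    exact hder.mono (Set.sep_subset _ _)
  filter_upwards [measure_eq_zero_iff_ae_notMem.mp hnull] with s hs x hx h0 h1
  refine hs ⟨x, ⟨hx, by linear_combination b x * h1 - b' x * h0⟩, ?_⟩
  rw [neg_eq_iff_eq_neg, div_eq_iff (hb0 x hx)]
  linear_combination h0

theorem IsCompact.finite_zeros_of_hasDerivAt {𝕜 F : Type*} [NontriviallyNormedField 𝕜]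
    [NormedAddCommGroup F] [NormedSpace 𝕜 F] {K : Set 𝕜} (hK : IsCompact K) {f f' : 𝕜 → F}
    (hf : ∀ x ∈ K, HasDerivAt f (f' x) x) (hnd : ∀ x ∈ K, f x = 0 → f' x ≠ 0) :
    {x ∈ K | f x = 0}.Finite := by
  have hcont : ContinuousOn f K := fun x hx => (hf x hx).continuousAt.continuousWithinAt
  have hclosed : IsClosed {x ∈ K | f x = 0} :=
    hcont.preimage_isClosed_of_isClosed hK.isClosed isClosed_singleton
  refine (hK.of_isClosed_subset hclosed (Set.sep_subset _ _)).finite ?_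
  refine isDiscrete_iff_nhdsNE.mpr fun x hx => inf_principal_eq_bot.mpr ?_
  filter_upwards [(hf x hx.1).eventually_ne (hnd x hx.1 hx.2)] with z hz hzZ
  exact hz hzZ.2

theorem sard_type_perturbation_general (u φ : ℝ → ℝ) (hu : ContDiff ℝ 2 u) (hφ : ContDiff ℝ 2 φ)
    (c d : ℝ) (hφ' : ∀ x ∈ Set.Icc c d, deriv φ x ≠ 0) :
    ∀ᵐ s : ℝ ∂volume,
      (∀ x ∈ Set.Icc c d, deriv u x + s * deriv φ x = 0 →
        deriv (deriv u) x + s * deriv (deriv φ) x ≠ 0) ∧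
      {x ∈ Set.Icc c d | deriv u x + s * deriv φ x = 0}.Finite := by
  have hdu x : HasDerivAt (deriv u) (deriv (deriv u) x) x :=
    (hu.differentiable_deriv_two x).hasDerivAt
  have hdφ x : HasDerivAt (deriv φ) (deriv (deriv φ) x) x :=
    (hφ.differentiable_deriv_two x).hasDerivAt
  filter_upwards [ae_forall_add_mul_eq_zero_imp_deriv_ne_zero
    (fun x _ => (hdu x).hasDerivWithinAt) (fun x _ => (hdφ x).hasDerivWithinAt) hφ']
    with s hs
  exact ⟨hs, isCompact_Icc.finite_zeros_of_hasDerivAt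
    (fun x _ => (hdu x).add ((hdφ x).const_mul s)) hs⟩

/-- Sard-type perturbation lemma: if `u, φ : ℝ → ℝ` are `C²`, `c < d`, and `φ' ≠ 0` on
`[c,d]`, then for Lebesgue-a.e. `s ∈ ℝ`, every critical point of `u + s·φ` in `[c,d]` is
nondegenerate; consequently, for a.e. `s`, `u + s·φ` has only finitely many critical points
in `[c,d]`. -/
theorem sard_type_perturbation (u φ : ℝ → ℝ) (hu : ContDiff ℝ 2 u) (hφ : ContDiff ℝ 2 φ)
    (c d : ℝ) (hcd : c < d) (hφ' : ∀ x ∈ Set.Icc c d, deriv φ x ≠ 0) :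
    ∀ᵐ s : ℝ ∂volume,
      (∀ x ∈ Set.Icc c d, deriv u x + s * deriv φ x = 0 →
        deriv (deriv u) x + s * deriv (deriv φ) x ≠ 0) ∧
      {x ∈ Set.Icc c d | deriv u x + s * deriv φ x = 0}.Finite :=
  sard_type_perturbation_general u φ hu hφ c d hφ'
end
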